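/- Suppose 𝔠 ∈ D satisfies the regularity condition, g'(𝔠) = 0 and g''(𝔠) = 0 (whence g'''(𝔠) > 0). Then there exists a sequence (𝔠_N) of real numbers converging to 𝔠 such that, for every sufficiently large N: 𝔠_N ∈ D, g_N''(𝔠_N) = 0 and g_N'''(𝔠_N) > 0; moreover g_N(𝔠_N) → g(𝔠) and g_N'(𝔠_N) → 0 as N → ∞. The sequence is unique up to finitely many terms: any real sequence (𝔠'_N) converging to 𝔠 with g_N''(𝔠'_N) = 0 for all sufficiently large N satisfies 𝔠'_N = 𝔠_N for all sufficiently large N. -/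

import Mathlib

/-!
Write `g` and `g_N` as `z ↦ z⁻¹ + ∫ l / (1 - z l) dμ` for `μ = γ ν` and for the empirical measures
`μ_N = N⁻¹ ∑ δ_{λ_j}`. The regularity condition confines all these measures to one compact set of
`l` on which `1 - z l` stays away from `0` for `z` near `𝔠`; hence every derivative `g_N⁽ᵏ⁾` is
bounded near `𝔠` uniformly in `N`, and converges at `𝔠` to `g⁽ᵏ⁾(𝔠)` by weak convergence.
Once `g'(𝔠) = g''(𝔠) = 0`, `g'''(𝔠)` is `6 ∫ ψ² (ψ + 𝔠⁻¹)²` with `ψ = l / (1 - 𝔠 l)`, so it is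
positive. Then the `g_N''` are eventually strictly increasing on a fixed neighbourhood of `𝔠` and
change sign across `𝔠` on every smaller one: each has a unique zero `𝔠_N` there and `𝔠_N → 𝔠`.
The uniform bounds make the `g_N⁽ᵏ⁾` equi-Lipschitz, which carries the convergence at `𝔠` over to
the moving points `𝔠_N`.
-/

open MeasureTheory Filter Topology
open scoped ENNReal Classical

noncomputable section

/-- The (topological) support of a Borel measure on `ℝ`: the set of points all of whose
neighborhoods have positive measure. -/
def msupport (μ : Measure ℝ) : Set ℝ := {x | ∀ U ∈ nhds x, μ U ≠ 0}

open Metric Set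
open scoped Nat NNReal

lemma hasDerivAt_inv_pow_succ (k : ℕ) {z : ℝ} (hz : z ≠ 0) :
    HasDerivAt (fun w : ℝ => w⁻¹ ^ (k + 1)) (-(k + 1) * z⁻¹ ^ (k + 2)) z := by
  refine ((hasDerivAt_inv hz).fun_pow (k + 1)).congr_deriv ?_
  simp only [add_tsub_cancel_right, Nat.cast_add, Nat.cast_one]
  ring

lemma hasDerivAt_div_one_sub_mul_pow_succ (k : ℕ) {z l : ℝ} (h : 1 - z * l ≠ 0) :
    HasDerivAt (fun w => (l / (1 - w * l)) ^ (k + 1))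
      ((k + 1) * (l / (1 - z * l)) ^ (k + 2)) z := by
  have hden : HasDerivAt (fun w : ℝ => 1 - w * l) (-l) z := by
    simpa using ((hasDerivAt_id z).mul_const l).const_sub 1
  have hquot : HasDerivAt (fun w => l / (1 - w * l)) (l * l / (1 - z * l) ^ 2) z := by
    simpa using (hasDerivAt_const z l).fun_div hden h
  refine (hquot.fun_pow (k + 1)).congr_deriv ?_
  simp only [add_tsub_cancel_right, Nat.cast_add, Nat.cast_one]
  generalize 1 - z * l = d
  ring

lemma abs_div_one_sub_mul_pow_le {k : ℕ} {z l B m : ℝ} (hm : 0 < m) (hl : |l| ≤ B)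
    (h : m ≤ |1 - z * l|) : |(l / (1 - z * l)) ^ k| ≤ (B / m) ^ k := by
  rw [abs_pow, abs_div]
  exact pow_le_pow_left₀ (by positivity) (div_le_div₀ ((abs_nonneg l).trans hl) hl hm h) k

lemma measurable_div_one_sub_mul_pow (k : ℕ) (z : ℝ) :
    Measurable fun l : ℝ => (l / (1 - z * l)) ^ k := by
  fun_prop

lemma integrable_div_one_sub_mul_pow {μ : Measure ℝ} [IsFiniteMeasure μ] (k : ℕ) {z B m : ℝ}
    (hm : 0 < m) (hμ : ∀ᵐ l ∂μ, |l| ≤ B ∧ m ≤ |1 - z * l|) :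
    Integrable (fun l => (l / (1 - z * l)) ^ k) μ := by
  refine Integrable.of_bound (measurable_div_one_sub_mul_pow k z).aestronglyMeasurable
    ((B / m) ^ k) ?_
  filter_upwards [hμ] with l hl
  exact abs_div_one_sub_mul_pow_le hm hl.1 hl.2

/-- The closed form of the `k`-th derivative of `z ↦ z⁻¹ + ∫ l / (1 - z l) ∂μ`. -/
def gDeriv (μ : Measure ℝ) (k : ℕ) (z : ℝ) : ℝ :=
  (-1) ^ k * (k ! : ℝ) * z⁻¹ ^ (k + 1) + k ! * ∫ l, (l / (1 - z * l)) ^ (k + 1) ∂μ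

section gDeriv

variable {μ : Measure ℝ} [IsFiniteMeasure μ] {B m : ℝ}

lemma hasDerivAt_gDeriv (k : ℕ) {U : Set ℝ} (hU : IsOpen U) (hU0 : (0 : ℝ) ∉ U) (hm : 0 < m)
    (hμ : ∀ᵐ l ∂μ, |l| ≤ B ∧ ∀ x ∈ U, m ≤ |1 - x * l|) {z : ℝ} (hz : z ∈ U) :
    HasDerivAt (gDeriv μ k) (gDeriv μ (k + 1) z) z := by
  have hint : ∀ x ∈ U, ∀ k, Integrable (fun l => (l / (1 - x * l)) ^ k) μ := fun x hx k =>
    integrable_div_one_sub_mul_pow k hm (hμ.mono fun l hl => ⟨hl.1, hl.2 x hx⟩)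
  have hintegral := hasDerivAt_integral_of_dominated_loc_of_deriv_le (μ := μ)
    (F' := fun x l => (k + 1) * (l / (1 - x * l)) ^ (k + 2))
    (bound := fun _ => (k + 1) * (B / m) ^ (k + 2)) (hU.mem_nhds hz)
    (Eventually.of_forall fun x => (measurable_div_one_sub_mul_pow (k + 1) x).aestronglyMeasurable)
    (hint z hz (k + 1)) ((hint z hz (k + 2)).const_mul _).aestronglyMeasurable ?_
    (integrable_const _) ?_
  · refine (((hasDerivAt_inv_pow_succ k (ne_of_mem_of_not_mem hz hU0)).const_mul
      ((-1) ^ k * (k ! : ℝ))).add (hintegral.2.const_mul (k ! : ℝ))).congr_deriv ?_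
    rw [integral_const_mul, gDeriv, Nat.factorial_succ]
    push_cast
    ring
  · filter_upwards [hμ] with l hl x hx
    rw [norm_mul, Real.norm_eq_abs, Real.norm_eq_abs, abs_of_pos k.cast_add_one_pos]
    gcongr
    exact abs_div_one_sub_mul_pow_le hm hl.1 (hl.2 x hx)
  · filter_upwards [hμ] with l hl x hx
    exact hasDerivAt_div_one_sub_mul_pow_succ k fun h0 => by
      have := hl.2 x hx
      rw [h0, abs_zero] at this
      linarith

lemma abs_gDeriv_le (k : ℕ) (hm : 0 < m) {z : ℝ} (hμ : ∀ᵐ l ∂μ, |l| ≤ B ∧ m ≤ |1 - z * l|) :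
    |gDeriv μ k z| ≤ k ! * (|z|⁻¹ ^ (k + 1) + μ.real univ * (B / m) ^ (k + 1)) := by
  have hint : |∫ l, (l / (1 - z * l)) ^ (k + 1) ∂μ| ≤ (B / m) ^ (k + 1) * μ.real univ := by
    rw [← Real.norm_eq_abs]
    refine norm_integral_le_of_norm_le_const (hμ.mono fun l hl => ?_)
    exact abs_div_one_sub_mul_pow_le hm hl.1 hl.2
  calc |gDeriv μ k z|
      ≤ |(-1) ^ k * (k ! : ℝ) * z⁻¹ ^ (k + 1)| + |k ! * ∫ l, (l / (1 - z * l)) ^ (k + 1) ∂μ| :=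
        abs_add_le _ _
    _ = k ! * |z|⁻¹ ^ (k + 1) + k ! * |∫ l, (l / (1 - z * l)) ^ (k + 1) ∂μ| := by
        simp [abs_mul, abs_pow, abs_inv]
    _ ≤ k ! * (|z|⁻¹ ^ (k + 1) + μ.real univ * (B / m) ^ (k + 1)) := by
        rw [mul_add, mul_comm (μ.real univ)]
        gcongr

end gDeriv

lemma iteratedDeriv_eqOn_of_hasDerivAt {F : ℕ → ℝ → ℝ} {U : Set ℝ} (hU : IsOpen U)
    (hF : ∀ k, ∀ z ∈ U, HasDerivAt (F k) (F (k + 1) z) z) (m : ℕ) :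
    EqOn (iteratedDeriv m (F 0)) (F m) U := by
  induction m with
  | zero => intro z _; simp
  | succ m ih =>
    intro z hz
    rw [iteratedDeriv_succ, ← (hF m z hz).deriv]
    exact Filter.EventuallyEq.deriv_eq (eventually_of_mem (hU.mem_nhds hz) ih)

lemma inv_add_div_one_sub_mul {z l : ℝ} (hz : z ≠ 0) (h : 1 - z * l ≠ 0) :
    l / (1 - z * l) + z⁻¹ = (z * (1 - z * l))⁻¹ := by
  rw [← one_div z, div_add_div _ _ h hz, mul_comm (1 - z * l) z,
    show l * z + (1 - z * l) * 1 = 1 by ring, one_div]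

/-- With `ψ = l / (1 - z l)`, the relations `gDeriv μ 1 z = gDeriv μ 2 z = 0` say `∫ ψ² = z⁻²`
and `∫ ψ³ = -z⁻³`, whence `gDeriv μ 3 z = 6 ∫ ψ² (ψ + z⁻¹)²`; and `ψ + z⁻¹` never vanishes. -/
lemma gDeriv_three_pos {μ : Measure ℝ} {z : ℝ} (hz : z ≠ 0)
    (hint : ∀ k, Integrable (fun l => (l / (1 - z * l)) ^ k) μ)
    (h1 : gDeriv μ 1 z = 0) (h2 : gDeriv μ 2 z = 0) : 0 < gDeriv μ 3 z := by
  have hψ2 : ∫ l, (l / (1 - z * l)) ^ 2 ∂μ = z⁻¹ ^ 2 := by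
    simp only [gDeriv, inv_pow] at h1 ⊢
    norm_num at h1
    linarith
  have hψ3 : ∫ l, (l / (1 - z * l)) ^ 3 ∂μ = -z⁻¹ ^ 3 := by
    simp only [gDeriv, inv_pow] at h2 ⊢
    norm_num [Nat.factorial] at h2
    linarith
  have hq : ∫ l, (l / (1 - z * l)) ^ 2 * (l / (1 - z * l) + z⁻¹) ^ 2 ∂μ
      = gDeriv μ 3 z / 6 := by
    calc ∫ l, (l / (1 - z * l)) ^ 2 * (l / (1 - z * l) + z⁻¹) ^ 2 ∂μ
        = ∫ l, ((l / (1 - z * l)) ^ 4 + 2 * z⁻¹ * (l / (1 - z * l)) ^ 3)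
            + z⁻¹ ^ 2 * (l / (1 - z * l)) ^ 2 ∂μ := by
          congr 1 with l
          ring
      _ = gDeriv μ 3 z / 6 := by
          rw [integral_add ((hint 4).fun_add ((hint 3).const_mul _)) ((hint 2).const_mul _),
            integral_add (hint 4) ((hint 3).const_mul _), integral_const_mul, integral_const_mul,
            hψ2, hψ3, gDeriv]
          norm_num [Nat.factorial]
          ring
  have hsupp : Function.support (fun l => (l / (1 - z * l)) ^ 2) ⊆
      Function.support (fun l => (l / (1 - z * l)) ^ 2 * (l / (1 - z * l) + z⁻¹) ^ 2) := by
    intro l hl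
    have hψ : l / (1 - z * l) ≠ 0 := by simpa using hl
    have hden : 1 - z * l ≠ 0 := fun h => hψ (by simp [h])
    rw [Function.mem_support, inv_add_div_one_sub_mul hz hden]
    exact mul_ne_zero (pow_ne_zero _ hψ) (pow_ne_zero _ (inv_ne_zero (mul_ne_zero hz hden)))
  have hψ2_pos : 0 < μ (Function.support fun l => (l / (1 - z * l)) ^ 2) := by
    rw [← integral_pos_iff_support_of_nonneg (fun l => sq_nonneg _) (hint 2), hψ2]
    positivity
  have hq_pos := (integral_pos_iff_support_of_nonneg (fun l => by positivity)
    (((hint 4).fun_add ((hint 3).const_mul (2 * z⁻¹))).fun_add ((hint 2).const_mul (z⁻¹ ^ 2))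
      |>.congr (Eventually.of_forall fun l => by ring))).2 (hψ2_pos.trans_le (measure_mono hsupp))
  linarith

section RootTracking

variable {ι : Type*} {l : Filter ι} {c r K : ℝ}

lemma abs_sub_le_mul_of_hasDerivAt_ball {f f' : ℝ → ℝ}
    (hf : ∀ x ∈ ball c r, HasDerivAt f (f' x) x) (hK : ∀ x ∈ ball c r, |f' x| ≤ K)
    {x : ℝ} (hx : x ∈ ball c r) : |f x - f c| ≤ K * |x - c| := by
  simpa [Real.norm_eq_abs] using (convex_ball c r).norm_image_sub_le_of_norm_hasDerivWithin_le
    (fun y hy => (hf y hy).hasDerivWithinAt) (fun y hy => by simpa using hK y hy)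
    (mem_ball_self (pos_of_mem_ball hx)) hx

lemma tendsto_apply_of_hasDerivAt_of_abs_le {f f' : ι → ℝ → ℝ} {y : ℝ} (hr : 0 < r)
    (hf : ∀ᶠ i in l, ∀ x ∈ ball c r, HasDerivAt (f i) (f' i x) x)
    (hK : ∀ᶠ i in l, ∀ x ∈ ball c r, |f' i x| ≤ K)
    (hc : Tendsto (fun i => f i c) l (𝓝 y)) {x : ι → ℝ} (hx : Tendsto x l (𝓝 c)) :
    Tendsto (fun i => f i (x i)) l (𝓝 y) := by
  have hlim : Tendsto (fun i => K * |x i - c| + |f i c - y|) l (𝓝 0) := by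
    simpa using ((hx.sub_const c).abs.const_mul K).add (hc.sub_const y).abs
  rw [tendsto_iff_norm_sub_tendsto_zero]
  refine squeeze_zero' (Eventually.of_forall fun i => norm_nonneg _) ?_ hlim
  filter_upwards [hf, hK, hx (ball_mem_nhds c hr)] with i hfi hKi hxi
  calc ‖f i (x i) - y‖ ≤ |f i (x i) - f i c| + |f i c - y| := abs_sub_le _ _ _
    _ ≤ K * |x i - c| + |f i c - y| := by
        gcongr
        exact abs_sub_le_mul_of_hasDerivAt_ball hfi hKi hxi

lemma exists_tendsto_zero_of_strictMonoOn {h : ι → ℝ → ℝ} {ρ : ℝ} (hρ : 0 < ρ)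
    (hmono : ∀ᶠ i in l,
      ContinuousOn (h i) (closedBall c ρ) ∧ StrictMonoOn (h i) (closedBall c ρ))
    (hsign : ∀ δ ∈ Ioc 0 ρ, ∀ᶠ i in l, h i (c - δ) < 0 ∧ 0 < h i (c + δ)) :
    ∃ x : ι → ℝ, Tendsto x l (𝓝 c) ∧ (∀ᶠ i in l, h i (x i) = 0) ∧
      ∀ x' : ι → ℝ, Tendsto x' l (𝓝 c) → (∀ᶠ i in l, h i (x' i) = 0) → x' =ᶠ[l] x := by
  let x i := if H : ∃ z ∈ closedBall c ρ, h i z = 0 then H.choose else c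
  have hx_spec : ∀ i, (∃ z ∈ closedBall c ρ, h i z = 0) →
      x i ∈ closedBall c ρ ∧ h i (x i) = 0 := fun i H => by
    simp only [x, dif_pos H]
    exact H.choose_spec
  have hroot : ∀ δ ∈ Ioc 0 ρ, ∀ᶠ i in l, x i ∈ closedBall c δ ∧ h i (x i) = 0 := by
    intro δ hδ
    filter_upwards [hmono, hsign δ hδ] with i ⟨hcont, hinj⟩ ⟨hneg, hpos⟩
    have hsub : closedBall c δ ⊆ closedBall c ρ := closedBall_subset_closedBall hδ.2
    obtain ⟨z, hz, hz0⟩ := intermediate_value_Icc (by linarith [hδ.1])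
      (hcont.mono (Real.closedBall_eq_Icc ▸ hsub)) ⟨hneg.le, hpos.le⟩
    rw [← Real.closedBall_eq_Icc] at hz
    obtain ⟨hxρ, hx0⟩ := hx_spec i ⟨z, hsub hz, hz0⟩
    exact ⟨hinj.injOn hxρ (hsub hz) (hx0.trans hz0.symm) ▸ hz, hx0⟩
  refine ⟨x, ?_, (hroot ρ ⟨hρ, le_rfl⟩).mono fun i hi => hi.2, ?_⟩
  · rw [Metric.tendsto_nhds]
    intro ε hε
    filter_upwards [hroot (min (ε / 2) ρ) ⟨by positivity, min_le_right _ _⟩] with i hi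
    exact (mem_closedBall.1 hi.1).trans_lt ((min_le_left _ _).trans_lt (half_lt_self hε))
  · intro x' hx' hx'0
    filter_upwards [hroot ρ ⟨hρ, le_rfl⟩, hmono, hx'0, hx' (closedBall_mem_nhds c hρ)]
      with i hi hmi h0 hmem
    exact hmi.2.injOn hmem hi.1 (h0.trans hi.2.symm)

lemma exists_pos_eventually_half_le_on_closedBall {f f' : ι → ℝ → ℝ} {y : ℝ} (hr : 0 < r)
    (hf : ∀ᶠ i in l, ∀ x ∈ ball c r, HasDerivAt (f i) (f' i x) x)
    (hK : ∀ᶠ i in l, ∀ x ∈ ball c r, |f' i x| ≤ K)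
    (hc : Tendsto (fun i => f i c) l (𝓝 y)) (hy : 0 < y) :
    ∃ ρ > 0, ρ < r ∧ ∀ᶠ i in l, ∀ x ∈ closedBall c ρ, y / 2 ≤ f i x := by
  obtain ⟨ρ, hρ, hρr, hKρ⟩ : ∃ ρ > 0, ρ < r ∧ K * ρ ≤ y / 4 := by
    refine ⟨min (r / 2) (y / (4 * max K 1)), by positivity, (min_le_left _ _).trans_lt
      (half_lt_self hr), ?_⟩
    calc K * min (r / 2) (y / (4 * max K 1))
        ≤ max K 1 * (y / (4 * max K 1)) := by gcongr; exacts [le_max_left _ _, min_le_right _ _]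
      _ = y / 4 := by field_simp
  refine ⟨ρ, hρ, hρr, ?_⟩
  filter_upwards [hf, hK, hc.eventually (lt_mem_nhds (by linarith : 3 * y / 4 < y))]
    with i hfi hKi hci x hx
  have hlip := abs_sub_le_mul_of_hasDerivAt_ball hfi hKi (closedBall_subset_ball hρr hx)
  have hK0 : 0 ≤ K := (abs_nonneg _).trans (hKi c (mem_ball_self hr))
  have : K * |x - c| ≤ K * ρ := mul_le_mul_of_nonneg_left (mem_closedBall.1 hx) hK0
  linarith [(abs_le.1 hlip).1]

lemma exists_tendsto_zero_of_tendsto_deriv_pos {h h' h'' : ι → ℝ → ℝ} {y : ℝ} (hr : 0 < r)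
    (hd : ∀ᶠ i in l, ∀ x ∈ ball c r,
      HasDerivAt (h i) (h' i x) x ∧ HasDerivAt (h' i) (h'' i x) x)
    (hK : ∀ᶠ i in l, ∀ x ∈ ball c r, |h'' i x| ≤ K)
    (h0 : Tendsto (fun i => h i c) l (𝓝 0)) (h1 : Tendsto (fun i => h' i c) l (𝓝 y))
    (hy : 0 < y) :
    ∃ x : ι → ℝ, Tendsto x l (𝓝 c) ∧ (∀ᶠ i in l, h i (x i) = 0) ∧
      ∀ x' : ι → ℝ, Tendsto x' l (𝓝 c) → (∀ᶠ i in l, h i (x' i) = 0) → x' =ᶠ[l] x := by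
  obtain ⟨ρ, hρ, hρr, hlower⟩ := exists_pos_eventually_half_le_on_closedBall hr
    (hd.mono fun i hi x hx => (hi x hx).2) hK h1 hy
  have hball : closedBall c ρ ⊆ ball c r := closedBall_subset_ball hρr
  have hmono : ∀ᶠ i in l, ContinuousOn (h i) (closedBall c ρ) ∧
      (∀ x ∈ closedBall c ρ, y / 2 ≤ deriv (h i) x) := by
    filter_upwards [hd, hlower] with i hdi hli
    refine ⟨fun x hx => (hdi x (hball hx)).1.continuousAt.continuousWithinAt, fun x hx => ?_⟩
    rw [(hdi x (hball hx)).1.deriv]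
    exact hli x hx
  refine exists_tendsto_zero_of_strictMonoOn hρ (hmono.mono fun i hi => ⟨hi.1,
    strictMonoOn_of_deriv_pos (convex_closedBall c ρ) hi.1 fun x hx =>
      (half_pos hy).trans_le (hi.2 x (interior_subset hx))⟩) fun δ hδ => ?_
  have hsmall : ∀ᶠ i in l, h i c ∈ Ioo (-(y / 2 * δ)) (y / 2 * δ) :=
    h0.eventually (Ioo_mem_nhds (by nlinarith [hδ.1]) (by nlinarith [hδ.1]))
  filter_upwards [hmono, hd, hsmall] with i hmi hdi hsi
  have hmvt := (convex_closedBall c ρ).mul_sub_le_image_sub_of_le_deriv hmi.1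
    (fun x hx => (hdi x (hball (interior_subset hx))).1.differentiableAt.differentiableWithinAt)
    fun x hx => hmi.2 x (interior_subset hx)
  have hmem : ∀ s ∈ Icc (c - δ) (c + δ), s ∈ closedBall c ρ := fun s hs => by
    rw [Real.closedBall_eq_Icc]
    exact ⟨by linarith [hs.1, hδ.2], by linarith [hs.2, hδ.2]⟩
  have hc := hmem c ⟨by linarith [hδ.1], by linarith [hδ.1]⟩
  have hminus := hmvt _ (hmem (c - δ) ⟨le_rfl, by linarith [hδ.1]⟩) _ hc (by linarith [hδ.1])
  have hplus := hmvt _ hc _ (hmem (c + δ) ⟨by linarith [hδ.1], le_rfl⟩) (by linarith [hδ.1])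
  constructor <;> nlinarith [hsi.1, hsi.2]

end RootTracking

lemma msupport_eq_support (μ : Measure ℝ) : msupport μ = μ.support := by
  ext x
  simp [msupport, Measure.mem_support_iff_forall, pos_iff_ne_zero]

lemma ae_mem_msupport (μ : Measure ℝ) : ∀ᵐ l ∂μ, l ∈ msupport μ := by
  rw [msupport_eq_support]
  exact Measure.support_mem_ae

lemma isOpen_setOf_ne_zero_inv_notMem {s : Set ℝ} (hs : IsClosed s) :
    IsOpen {x : ℝ | x ≠ 0 ∧ x⁻¹ ∉ s} :=
  continuousOn_inv₀.isOpen_inter_preimage isOpen_ne hs.isOpen_compl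

lemma exists_boundedContinuousFunction_eqOn {S : Set ℝ} (hS : IsCompact S) {f : ℝ → ℝ}
    (hf : ContinuousOn f S) : ∃ F : BoundedContinuousFunction ℝ ℝ, EqOn F f S := by
  have : CompactSpace S := isCompact_iff_compactSpace.mp hS
  obtain ⟨F, -, hF⟩ := BoundedContinuousFunction.exists_extension_norm_eq_of_isClosedEmbedding
    (BoundedContinuousFunction.mkOfCompact ⟨S.domRestrict f, hf.domRestrict⟩)
    hS.isClosed.isClosedEmbedding_subtypeVal
  exact ⟨F, fun x hx => congrFun hF ⟨x, hx⟩⟩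

section Empirical

variable {ι : Type*} [Fintype ι]

lemma integral_smul_sum_dirac (t : ℝ≥0) (x : ι → ℝ) (f : ℝ → ℝ) :
    ∫ l, f l ∂(t • ∑ j, Measure.dirac (x j)) = t * ∑ j, f (x j) := by
  rw [integral_smul_nnreal_measure, integral_finsetSum_measure fun j _ => integrable_dirac
    enorm_lt_top]
  simp [integral_dirac, NNReal.smul_def]

lemma ae_smul_sum_dirac {p : ℝ → Prop} (t : ℝ≥0) {x : ι → ℝ} (hx : ∀ j, p (x j)) :
    ∀ᵐ l ∂(t • ∑ j, Measure.dirac (x j)), p l := by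
  refine Measure.ae_smul_measure ?_ t
  rw [← Measure.sum_fintype, Measure.ae_sum_iff]
  intro j
  simpa [ae_dirac_eq] using hx j

lemma measureReal_smul_sum_dirac_univ (t : ℝ≥0) (x : ι → ℝ) :
    (t • ∑ j, Measure.dirac (x j)).real univ = t * Fintype.card ι := by
  simpa using integral_smul_sum_dirac t x fun _ => 1

end Empirical

lemma tendsto_inv_mul_sum_of_continuousOn {γ : ℝ} (hγ : 0 < γ) {ν : Measure ℝ} {n : ℕ → ℕ}
    (hn : Tendsto (fun N => (n N : ℝ) / N) atTop (𝓝 γ)) {lam : (N : ℕ) → Fin (n N) → ℝ}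
    (hweak : ∀ f : BoundedContinuousFunction ℝ ℝ,
      Tendsto (fun N => (n N : ℝ)⁻¹ * ∑ j, f (lam N j)) atTop (𝓝 (∫ x, f x ∂ν)))
    {S : Set ℝ} (hS : IsCompact S) {f : ℝ → ℝ} (hf : ContinuousOn f S)
    (hνS : ∀ᵐ l ∂ν, l ∈ S) (hlamS : ∀ᶠ N in atTop, ∀ j, lam N j ∈ S) :
    Tendsto (fun N : ℕ => (N : ℝ)⁻¹ * ∑ j, f (lam N j)) atTop (𝓝 (γ * ∫ l, f l ∂ν)) := by
  obtain ⟨F, hF⟩ := exists_boundedContinuousFunction_eqOn hS hf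
  have hFν : ∫ l, F l ∂ν = ∫ l, f l ∂ν := integral_congr_ae (hνS.mono fun l hl => hF hl)
  refine (hn.mul (hFν ▸ hweak F)).congr' ?_
  filter_upwards [hlamS, hn.eventually (lt_mem_nhds hγ)] with N hN hpos
  have hn0 : (n N : ℝ) ≠ 0 := fun h => by simp [h] at hpos
  rw [Finset.sum_congr rfl fun j _ => hF (hN j)]
  field_simp

def invSeparated (c ε A : ℝ) : Set ℝ := {l | l ∈ Icc ε A ∧ ε ≤ |c - l⁻¹|}

section invSeparated

variable {c ε A l : ℝ}

lemma isCompact_invSeparated (hε : 0 < ε) : IsCompact (invSeparated c ε A) := by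
  refine isCompact_Icc.of_isClosed_subset ?_ fun l hl => hl.1
  exact (continuousOn_const.sub (continuousOn_inv₀.mono fun l hl => (hε.trans_le hl.1).ne')).abs
    |>.preimage_isClosed_of_isClosed isClosed_Icc isClosed_Ici

lemma invSeparated_mono {ε' A' : ℝ} (hε : ε' ≤ ε) (hA : A ≤ A') :
    invSeparated c ε A ⊆ invSeparated c ε' A' :=
  fun _ hl => ⟨⟨hε.trans hl.1.1, hl.1.2.trans hA⟩, hε.trans hl.2⟩

lemma abs_le_of_mem_invSeparated (hε : 0 < ε) (hl : l ∈ invSeparated c ε A) : |l| ≤ A := by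
  rw [abs_of_pos (hε.trans_le hl.1.1)]
  exact hl.1.2

lemma le_abs_one_sub_mul_of_mem_invSeparated (hε : 0 < ε) (hl : l ∈ invSeparated c ε A)
    {z : ℝ} (hz : z ∈ ball c (ε / 2)) : ε * (ε / 2) ≤ |1 - z * l| := by
  have hl0 : 0 < l := hε.trans_le hl.1.1
  have hzc : |z - c| < ε / 2 := by rwa [mem_ball, Real.dist_eq] at hz
  have hsep : ε / 2 ≤ |l⁻¹ - z| := by
    linarith [hl.2, abs_sub_le c z l⁻¹, abs_sub_comm c z, abs_sub_comm z l⁻¹]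
  rw [show 1 - z * l = l * (l⁻¹ - z) by field_simp, abs_mul, abs_of_pos hl0]
  exact mul_le_mul hl.1.1 hsep (by positivity) hl0.le

lemma exists_subset_invSeparated {K : Set ℝ} (hK : IsCompact K) (hK0 : K ⊆ Ioi 0)
    (hc : c⁻¹ ∉ K) : ∃ ε > 0, ∃ A ≥ 0, K ⊆ invSeparated c ε A := by
  rcases K.eq_empty_or_nonempty with rfl | hne
  · exact ⟨1, one_pos, 0, le_rfl, empty_subset _⟩
  obtain ⟨l₀, hl₀, hmin⟩ := hK.exists_isMinOn (f := fun l => min l |c - l⁻¹|) hne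
    (continuousOn_id.inf
    (continuousOn_const.sub (continuousOn_inv₀.mono fun l hl => (hK0 hl).ne')).abs)
  obtain ⟨A, hA⟩ := hK.bddAbove
  have hsep : 0 < |c - l₀⁻¹| := abs_pos.2 (sub_ne_zero.2 fun h => hc (h ▸ (inv_inv l₀).symm ▸ hl₀))
  refine ⟨min l₀ |c - l₀⁻¹|, lt_min (hK0 hl₀) hsep, A, (hK0 hl₀).le.trans (hA hl₀),
    fun l hl => ?_⟩
  have := isMinOn_iff.1 hmin l hl
  exact ⟨⟨this.trans (min_le_left _ _), hA hl⟩, this.trans (min_le_right _ _)⟩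

end invSeparated

section gDerivOnInvSeparated

variable {μ : Measure ℝ} {c ε A r : ℝ}

lemma ae_abs_le_and_le_abs_one_sub_mul (hε : 0 < ε) (hrε : r ≤ ε / 2)
    (hμ : ∀ᵐ l ∂μ, l ∈ invSeparated c ε A) :
    ∀ᵐ l ∂μ, |l| ≤ A ∧ ∀ x ∈ ball c r, ε * (ε / 2) ≤ |1 - x * l| :=
  hμ.mono fun _ hl => ⟨abs_le_of_mem_invSeparated hε hl, fun _ hx =>
    le_abs_one_sub_mul_of_mem_invSeparated hε hl (ball_subset_ball hrε hx)⟩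

variable [IsFiniteMeasure μ]

lemma hasDerivAt_gDeriv_of_ae_mem_invSeparated (hrc : r ≤ |c|) (hε : 0 < ε) (hrε : r ≤ ε / 2)
    (hμ : ∀ᵐ l ∂μ, l ∈ invSeparated c ε A) (k : ℕ) {z : ℝ} (hz : z ∈ ball c r) :
    HasDerivAt (gDeriv μ k) (gDeriv μ (k + 1) z) z := by
  refine hasDerivAt_gDeriv k isOpen_ball ?_ (by positivity)
    (ae_abs_le_and_le_abs_one_sub_mul hε hrε hμ) hz
  rw [mem_ball, dist_comm, Real.dist_eq, sub_zero, not_lt]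
  exact hrc

lemma abs_gDeriv_le_of_ae_mem_invSeparated (hrc : r ≤ |c| / 2) (hε : 0 < ε) (hrε : r ≤ ε / 2)
    (hμ : ∀ᵐ l ∂μ, l ∈ invSeparated c ε A) (k : ℕ) {z : ℝ} (hz : z ∈ ball c r) :
    |gDeriv μ k z| ≤
      k ! * ((|c| / 2)⁻¹ ^ (k + 1) + μ.real univ * (A / (ε * (ε / 2))) ^ (k + 1)) := by
  have hzc : |z - c| < r := by rwa [mem_ball, Real.dist_eq] at hz
  have hz : |c| / 2 ≤ |z| := by linarith [abs_sub_abs_le_abs_sub c z, abs_sub_comm c z]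
  refine (abs_gDeriv_le k (by positivity) ((ae_abs_le_and_le_abs_one_sub_mul hε hrε hμ).mono
    fun l hl => ⟨hl.1, hl.2 z (by rwa [mem_ball, Real.dist_eq])⟩)).trans ?_
  have hc : 0 < |c| / 2 := by linarith [abs_nonneg (z - c)]
  gcongr

lemma iteratedDeriv_gDeriv_zero_eqOn (hrc : r ≤ |c|) (hε : 0 < ε) (hrε : r ≤ ε / 2)
    (hμ : ∀ᵐ l ∂μ, l ∈ invSeparated c ε A) (m : ℕ) :
    EqOn (iteratedDeriv m (gDeriv μ 0)) (gDeriv μ m) (ball c r) :=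
  iteratedDeriv_eqOn_of_hasDerivAt isOpen_ball
    (fun k _ hz => hasDerivAt_gDeriv_of_ae_mem_invSeparated hrc hε hrε hμ k hz) m

lemma integrable_div_one_sub_mul_pow_of_ae_mem_invSeparated (hε : 0 < ε)
    (hμ : ∀ᵐ l ∂μ, l ∈ invSeparated c ε A) (k : ℕ) :
    Integrable (fun l => (l / (1 - c * l)) ^ k) μ :=
  integrable_div_one_sub_mul_pow k (by positivity) ((ae_abs_le_and_le_abs_one_sub_mul hε le_rfl
    hμ).mono fun _ hl => ⟨hl.1, hl.2 c (mem_ball_self (half_pos hε))⟩)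

end gDerivOnInvSeparated

theorem cusp_approximation_of_tendsto_gDeriv {μ : Measure ℝ} [IsFiniteMeasure μ]
    {μN : ℕ → Measure ℝ} [∀ N, IsFiniteMeasure (μN N)] {c ε A M : ℝ} (hc : c ≠ 0) (hε : 0 < ε)
    (hA : 0 ≤ A) (hμ : ∀ᵐ l ∂μ, l ∈ invSeparated c ε A)
    (hμN : ∀ᶠ N in atTop, ∀ᵐ l ∂μN N, l ∈ invSeparated c ε A)
    (hM : ∀ᶠ N in atTop, (μN N).real univ ≤ M)
    (hconv : ∀ k, Tendsto (fun N => gDeriv (μN N) k c) atTop (𝓝 (gDeriv μ k c)))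
    (h1 : deriv (gDeriv μ 0) c = 0) (h2 : iteratedDeriv 2 (gDeriv μ 0) c = 0) :
    0 < iteratedDeriv 3 (gDeriv μ 0) c ∧ ∃ cN : ℕ → ℝ, Tendsto cN atTop (𝓝 c) ∧
      (∀ᶠ N in atTop, iteratedDeriv 2 (gDeriv (μN N) 0) (cN N) = 0 ∧
        0 < iteratedDeriv 3 (gDeriv (μN N) 0) (cN N)) ∧
      Tendsto (fun N => gDeriv (μN N) 0 (cN N)) atTop (𝓝 (gDeriv μ 0 c)) ∧
      Tendsto (fun N => deriv (gDeriv (μN N) 0) (cN N)) atTop (𝓝 0) ∧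
      ∀ cN' : ℕ → ℝ, Tendsto cN' atTop (𝓝 c) →
        (∀ᶠ N in atTop, iteratedDeriv 2 (gDeriv (μN N) 0) (cN' N) = 0) →
        ∀ᶠ N in atTop, cN' N = cN N := by
  set r := min (|c| / 2) (ε / 2)
  have hr : 0 < r := lt_min (by positivity) (by positivity)
  have hrc : r ≤ |c| / 2 := min_le_left _ _
  have hrc' : r ≤ |c| := hrc.trans (half_le_self (abs_nonneg c))
  have hrε : r ≤ ε / 2 := min_le_right _ _
  have hiter := iteratedDeriv_gDeriv_zero_eqOn hrc' hε hrε hμ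
  have hiterN : ∀ᶠ N in atTop, ∀ m, EqOn (iteratedDeriv m (gDeriv (μN N) 0)) (gDeriv (μN N) m)
      (ball c r) := hμN.mono fun N hN => iteratedDeriv_gDeriv_zero_eqOn hrc' hε hrε hN
  have hderivN : ∀ᶠ N in atTop, ∀ k, ∀ x ∈ ball c r,
      HasDerivAt (gDeriv (μN N) k) (gDeriv (μN N) (k + 1) x) x :=
    hμN.mono fun N hN => hasDerivAt_gDeriv_of_ae_mem_invSeparated hrc' hε hrε hN
  have hbound : ∀ k, ∀ᶠ N in atTop, ∀ x ∈ ball c r, |gDeriv (μN N) k x| ≤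
      k ! * ((|c| / 2)⁻¹ ^ (k + 1) + M * (A / (ε * (ε / 2))) ^ (k + 1)) := fun k => by
    filter_upwards [hμN, hM] with N hN hMN x hx
    refine (abs_gDeriv_le_of_ae_mem_invSeparated hrc hε hrε hN k hx).trans ?_
    gcongr
  have hc_mem : c ∈ ball c r := mem_ball_self hr
  rw [← iteratedDeriv_one, hiter 1 hc_mem] at h1
  rw [hiter 2 hc_mem] at h2
  have h3 := gDeriv_three_pos hc
    (integrable_div_one_sub_mul_pow_of_ae_mem_invSeparated hε hμ) h1 h2
  obtain ⟨cN, hcN, hroot, huniq⟩ := exists_tendsto_zero_of_tendsto_deriv_pos hr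
    (hderivN.mono fun N h x hx => ⟨h 2 x hx, h 3 x hx⟩) (hbound 4) (h2 ▸ hconv 2) (hconv 3) h3
  have hlim : ∀ k, Tendsto (fun N => gDeriv (μN N) k (cN N)) atTop (𝓝 (gDeriv μ k c)) :=
    fun k => tendsto_apply_of_hasDerivAt_of_abs_le hr (hderivN.mono fun N h => h k)
      (hbound (k + 1)) (hconv k) hcN
  have hball : ∀ᶠ N in atTop, cN N ∈ ball c r := hcN (ball_mem_nhds c hr)
  refine ⟨hiter 3 hc_mem ▸ h3, cN, hcN, ?_, hlim 0, ?_, fun cN' hcN' hroot' => huniq cN' hcN' ?_⟩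
  · filter_upwards [hiterN, hball, hroot, (hlim 3).eventually (lt_mem_nhds h3)]
      with N hN hmem h2N h3N
    rw [hN 2 hmem, hN 3 hmem]
    exact ⟨h2N, h3N⟩
  · refine (h1 ▸ hlim 1).congr' ?_
    filter_upwards [hiterN, hball] with N hN hmem
    rw [← iteratedDeriv_one, hN 1 hmem]
  · filter_upwards [hiterN, hcN' (ball_mem_nhds c hr), hroot'] with N hN hmem h2N
    rwa [← hN 2 hmem]

lemma continuousOn_div_one_sub_mul_pow_invSeparated {c ε A : ℝ} (hε : 0 < ε) (k : ℕ) :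
    ContinuousOn (fun l => (l / (1 - c * l)) ^ k) (invSeparated c ε A) := by
  refine (continuousOn_id.div (by fun_prop) fun l hl h0 => ?_).pow k
  have := le_abs_one_sub_mul_of_mem_invSeparated hε hl (mem_ball_self (half_pos hε))
  rw [h0, abs_zero] at this
  nlinarith

lemma exists_invSeparated_of_regular {ν : Measure ℝ} (hν_comp : IsCompact (msupport ν))
    (hν_pos : msupport ν ⊆ Ioi 0) {c : ℝ} (hc : c⁻¹ ∉ msupport ν) {n : ℕ → ℕ}
    {lam : (N : ℕ) → Fin (n N) → ℝ} (hlam_inf : ∃ ε > 0, ∀ᶠ N in atTop, ∀ j, ε ≤ lam N j)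
    (hlam_sup : ∃ C : ℝ, ∀ N, ∀ j, lam N j ≤ C)
    (hreg : ∃ ε > 0, ∀ᶠ N in atTop, ∀ j, ε ≤ |c - (lam N j)⁻¹|) :
    ∃ ε > 0, ∃ A ≥ 0, (∀ᵐ l ∂ν, l ∈ invSeparated c ε A) ∧
      ∀ᶠ N in atTop, ∀ j, lam N j ∈ invSeparated c ε A := by
  obtain ⟨ε₁, hε₁, A, hA, hνS⟩ := exists_subset_invSeparated hν_comp hν_pos hc
  obtain ⟨ε₂, hε₂, hlam₂⟩ := hlam_inf
  obtain ⟨ε₃, hε₃, hlam₃⟩ := hreg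
  obtain ⟨C, hC⟩ := hlam_sup
  refine ⟨min ε₁ (min ε₂ ε₃), by positivity, max A C, hA.trans (le_max_left _ _),
    (ae_mem_msupport ν).mono fun l hl =>
      invSeparated_mono (min_le_left _ _) (le_max_left _ _) (hνS hl), ?_⟩
  filter_upwards [hlam₂, hlam₃] with N h₂ h₃ j
  exact ⟨⟨(min_le_right _ _).trans ((min_le_left _ _).trans (h₂ j)),
    (hC N j).trans (le_max_right _ _)⟩, (min_le_right _ _).trans ((min_le_right _ _).trans (h₃ j))⟩

theorem cusp_finite_N_approximation_general
    (γ : ℝ) (hγ : 0 < γ)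
    (ν : Measure ℝ) [IsProbabilityMeasure ν]
    (hν_comp : IsCompact (msupport ν)) (hν_pos : msupport ν ⊆ Set.Ioi 0)
    (n : ℕ → ℕ) (hn : Tendsto (fun N => (n N : ℝ) / N) atTop (nhds γ))
    (lam : (N : ℕ) → Fin (n N) → ℝ)
    (hlam_inf : ∃ ε > 0, ∀ᶠ N in atTop, ∀ j, ε ≤ lam N j)
    (hlam_sup : ∃ C : ℝ, ∀ N, ∀ j, lam N j ≤ C)
    (hweak : ∀ f : BoundedContinuousFunction ℝ ℝ,
      Tendsto (fun N => (n N : ℝ)⁻¹ * ∑ j, f (lam N j)) atTop (nhds (∫ x, f x ∂ν)))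
    -- the functions g_N and g
    (g : ℝ → ℝ) (hg : g = fun w => w⁻¹ + γ * ∫ l, l / (1 - w * l) ∂ν)
    (gN : ℕ → ℝ → ℝ)
    (hgN : gN = fun (N : ℕ) (z : ℝ) => z⁻¹ + (N : ℝ)⁻¹ * ∑ j, lam N j / (1 - z * lam N j))
    (Dset : Set ℝ) (hD : Dset = {x : ℝ | x ≠ 0 ∧ x⁻¹ ∉ msupport ν})
    -- the point 𝔠 and the regularity condition
    (c : ℝ) (hcD : c ∈ Dset)
    (hreg : ∃ ε > 0, ∀ᶠ N in atTop, ∀ j, ε ≤ |c - (lam N j)⁻¹|)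
    (hg1 : deriv g c = 0) (hg2 : iteratedDeriv 2 g c = 0) :
    0 < iteratedDeriv 3 g c ∧
    ∃ cN : ℕ → ℝ,
      Tendsto cN atTop (nhds c) ∧
      (∀ᶠ N in atTop,
        cN N ∈ Dset ∧ iteratedDeriv 2 (gN N) (cN N) = 0 ∧
        0 < iteratedDeriv 3 (gN N) (cN N)) ∧
      Tendsto (fun N => gN N (cN N)) atTop (nhds (g c)) ∧
      Tendsto (fun N => deriv (gN N) (cN N)) atTop (nhds 0) ∧
      (∀ cN' : ℕ → ℝ, Tendsto cN' atTop (nhds c) →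
        (∀ᶠ N in atTop, iteratedDeriv 2 (gN N) (cN' N) = 0) →
        ∀ᶠ N in atTop, cN' N = cN N) := by
  subst hD
  obtain ⟨hc0, hcν⟩ := hcD
  obtain ⟨ε, hε, A, hA, hνS, hlamS⟩ :=
    exists_invSeparated_of_regular hν_comp hν_pos hcν hlam_inf hlam_sup hreg
  set μ : Measure ℝ := γ.toNNReal • ν
  set μN : ℕ → Measure ℝ := fun N => (N : ℝ≥0)⁻¹ • ∑ j, Measure.dirac (lam N j)
  have hμ_int : ∀ f : ℝ → ℝ, ∫ l, f l ∂μ = γ * ∫ l, f l ∂ν := fun f => by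
    rw [integral_smul_nnreal_measure, NNReal.smul_def, Real.coe_toNNReal _ hγ.le, smul_eq_mul]
  obtain rfl : g = gDeriv μ 0 := by ext w; simp [hg, gDeriv, hμ_int]
  obtain rfl : gN = fun N => gDeriv (μN N) 0 := by
    ext N z
    simp only [hgN, gDeriv, μN, integral_smul_sum_dirac, NNReal.coe_inv, NNReal.coe_natCast]
    simp
  have hconv : ∀ k, Tendsto (fun N => gDeriv (μN N) k c) atTop (𝓝 (gDeriv μ k c)) := fun k => by
    simp only [gDeriv, μN, integral_smul_sum_dirac, NNReal.coe_inv, NNReal.coe_natCast, hμ_int]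
    exact tendsto_const_nhds.add (.const_mul _ (tendsto_inv_mul_sum_of_continuousOn hγ hn hweak
      (isCompact_invSeparated hε) (continuousOn_div_one_sub_mul_pow_invSeparated hε _) hνS hlamS))
  have hmass : ∀ᶠ N in atTop, (μN N).real univ ≤ γ + 1 := by
    filter_upwards [hn.eventually (gt_mem_nhds (lt_add_one γ))] with N hN
    simp only [μN, measureReal_smul_sum_dirac_univ, NNReal.coe_inv, NNReal.coe_natCast,
      Fintype.card_fin, ← div_eq_inv_mul]
    exact hN.le
  obtain ⟨h3, cN, hcN, hroot, hval, hder, huniq⟩ := cusp_approximation_of_tendsto_gDeriv hc0 hε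
    hA (Measure.ae_smul_measure hνS _) (hlamS.mono fun N hN => ae_smul_sum_dirac _ hN) hmass
    hconv hg1 hg2
  refine ⟨h3, cN, hcN, ?_, hval, hder, huniq⟩
  filter_upwards [hroot, hcN.eventually ((isOpen_setOf_ne_zero_inv_notMem
    hν_comp.isClosed).mem_nhds ⟨hc0, hcν⟩)] with N hN hD
  exact ⟨hD, hN⟩

/-- Finite-`N` approximation of a regular cusp-point preimage: if `𝔠 ∈ D` is
regular with `g'(𝔠) = g''(𝔠) = 0` (whence `g'''(𝔠) > 0`), there is a sequence `𝔠_N → 𝔠` of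
zeros of `g_N''` with `g_N'''(𝔠_N) > 0`, `g_N(𝔠_N) → g(𝔠)`, `g_N'(𝔠_N) → 0`, unique up to
finitely many terms. -/
theorem cusp_finite_N_approximation
    (γ : ℝ) (hγ : 0 < γ)
    (ν : Measure ℝ) [IsProbabilityMeasure ν]
    (hν_comp : IsCompact (msupport ν)) (hν_pos : msupport ν ⊆ Set.Ioi 0)
    (n : ℕ → ℕ) (hn : Tendsto (fun N => (n N : ℝ) / N) atTop (nhds γ))
    (lam : (N : ℕ) → Fin (n N) → ℝ)
    (hlam_mono : ∀ N, Monotone (lam N))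
    (hlam_pos : ∀ N j, 0 < lam N j)
    (hlam_inf : ∃ ε > 0, ∀ᶠ N in atTop, ∀ j, ε ≤ lam N j)
    (hlam_sup : ∃ C : ℝ, ∀ N, ∀ j, lam N j ≤ C)
    (hweak : ∀ f : BoundedContinuousFunction ℝ ℝ,
      Tendsto (fun N => (n N : ℝ)⁻¹ * ∑ j, f (lam N j)) atTop (nhds (∫ x, f x ∂ν)))
    -- the functions g_N and g
    (g : ℝ → ℝ) (hg : g = fun w => w⁻¹ + γ * ∫ l, l / (1 - w * l) ∂ν)
    (gN : ℕ → ℝ → ℝ)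
    (hgN : gN = fun (N : ℕ) (z : ℝ) => z⁻¹ + (N : ℝ)⁻¹ * ∑ j, lam N j / (1 - z * lam N j))
    (Dset : Set ℝ) (hD : Dset = {x : ℝ | x ≠ 0 ∧ x⁻¹ ∉ msupport ν})
    -- the point 𝔠 and the regularity condition
    (c : ℝ) (hcD : c ∈ Dset)
    (hreg : ∃ ε > 0, ∀ᶠ N in atTop, ∀ j, ε ≤ |c - (lam N j)⁻¹|)
    (hg1 : deriv g c = 0) (hg2 : iteratedDeriv 2 g c = 0) :
    0 < iteratedDeriv 3 g c ∧
    ∃ cN : ℕ → ℝ,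
      Tendsto cN atTop (nhds c) ∧
      (∀ᶠ N in atTop,
        cN N ∈ Dset ∧ iteratedDeriv 2 (gN N) (cN N) = 0 ∧
        0 < iteratedDeriv 3 (gN N) (cN N)) ∧
      Tendsto (fun N => gN N (cN N)) atTop (nhds (g c)) ∧
      Tendsto (fun N => deriv (gN N) (cN N)) atTop (nhds 0) ∧
      (∀ cN' : ℕ → ℝ, Tendsto cN' atTop (nhds c) →
        (∀ᶠ N in atTop, iteratedDeriv 2 (gN N) (cN' N) = 0) →
        ∀ᶠ N in atTop, cN' N = cN N) :=
  cusp_finite_N_approximation_general γ hγ ν hν_comp hν_pos n hn lam hlam_inf hlam_sup hweak g hg gN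
    hgN Dset hD c hcD hreg hg1 hg2
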